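/- Let T : H → H be a bounded left ℍ-linear map on H = L²(μ, ℍ), and let T' : H → H be a bounded left ℍ-linear adjoint of T (⟪T u, v⟫ = ⟪u, T' v⟫ for all u, v ∈ H) with T ∘ T' = T' ∘ T. Suppose T u = p • u and T v = r • v for some u, v ∈ H and p, r ∈ ℍ with θ(p) ≠ θ(r), where θ(q) = {λ·q·λ⁻¹ : λ ∈ ℍ, λ ≠ 0}. Then ⟪u, v⟫ = 0. -/

import Mathlib

/-!
Let `χ = X² - 2 Re(r) X + |r|²` be the real characteristic polynomial of `r`. Since `χ` has real
coefficients, `χ(T)` and `χ(T')` are adjoint to each other, and they commute because `T` is normal.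
As `χ(r) = 0`, `χ(T) v = 0`, hence `‖χ(T') v‖² = ⟪v, χ(T) χ(T') v⟫ = ⟪v, χ(T') χ(T) v⟫ = 0`. Then
`χ(p) ⟪u, v⟫ = ⟪χ(T) u, v⟫ = ⟪u, χ(T') v⟫ = 0`. Finally a quaternion root of `χ` has the real part
and norm of `r`, so it is similar to `r`; thus `χ(p) ≠ 0` and `⟪u, v⟫ = 0`.
-/

open MeasureTheory

/-- The quaternion-valued inner product on `H = L²(μ, ℍ)`:
`⟪u, v⟫ = ∫ u(x) · conj(v(x)) dμ(x)`. -/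
noncomputable def qInnerL2 {X : Type*} [MeasurableSpace X] (μ : Measure X)
    (u v : Lp (Quaternion ℝ) 2 μ) : Quaternion ℝ :=
  ∫ x, u x * star (v x) ∂μ

/-- A map `T : L²(μ, ℍ) → L²(μ, ℍ)` is left ℍ-linear. -/
def LeftHLinearL2 {X : Type*} [MeasurableSpace X] {μ : Measure X}
    (T : Lp (Quaternion ℝ) 2 μ → Lp (Quaternion ℝ) 2 μ) : Prop :=
  ∀ (p q : Quaternion ℝ) (u v : Lp (Quaternion ℝ) 2 μ),
    T (p • u + q • v) = p • T u + q • T v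

/-- A map `T : L²(μ, ℍ) → L²(μ, ℍ)` is bounded. -/
def BoundedOpL2 {X : Type*} [MeasurableSpace X] {μ : Measure X}
    (T : Lp (Quaternion ℝ) 2 μ → Lp (Quaternion ℝ) 2 μ) : Prop :=
  ∃ c : ℝ, 0 ≤ c ∧ ∀ u, ‖T u‖ ≤ c * ‖u‖


/-- The similarity orbit of a quaternion: `θ(q) = {λ q λ⁻¹ : λ ∈ ℍ \ {0}}`. -/
def simOrbit (q : Quaternion ℝ) : Set (Quaternion ℝ) :=
  {p | ∃ l : Quaternion ℝ, l ≠ 0 ∧ p = l * q * l⁻¹}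

open Polynomial Quaternion

theorem Commute.aeval_left {R A : Type*} [CommSemiring R] [Semiring A] [Algebra R A] {a b : A}
    (h : Commute a b) (f : R[X]) : Commute (aeval a f) b := by
  induction f using Polynomial.induction_on with
  | C r => simpa using Algebra.commute_algebraMap_left r b
  | add f g hf hg => simpa using hf.add_left hg
  | monomial n r ih =>
    rw [pow_succ, ← mul_assoc, map_mul, aeval_X]
    exact ih.mul_left h

theorem Commute.aeval {R A : Type*} [CommSemiring R] [Semiring A] [Algebra R A] {a b : A}
    (h : Commute a b) (f g : R[X]) : Commute (aeval a f) (aeval b g) :=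
  (h.symm.aeval_left g).symm.aeval_left f

theorem Module.End.aeval_apply_of_apply_eq_smul {R D M : Type*} [CommSemiring R] [Semiring D]
    [Algebra R D] [AddCommMonoid M] [Module D M] [Module R M] [IsScalarTower R D M]
    {A : Module.End D M} {p : D} {u : M} (hu : A u = p • u) (f : R[X]) :
    aeval A f u = aeval p f • u := by
  induction f using Polynomial.induction_on with
  | C r => simp [algebraMap_smul]
  | add f g hf hg => simp [hf, hg, add_smul]
  | monomial n r ih =>
    have hcomm : Commute (aeval p (C r * X ^ n)) p := (Commute.refl p).aeval_left _
    rw [pow_succ, ← mul_assoc, map_mul (aeval A), map_mul (aeval p), aeval_X, aeval_X,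
      Module.End.mul_apply, hu, map_smul, ih, smul_smul, hcomm.eq]

theorem IsConj.algebraMap_add {R A : Type*} [CommSemiring R] [Semiring A] [Algebra R A] (x : R)
    {a b : A} (h : IsConj a b) : IsConj (algebraMap R A x + a) (algebraMap R A x + b) := by
  obtain ⟨c, hc⟩ := h
  exact ⟨c, SemiconjBy.add_right (Algebra.commute_algebraMap_right x (c : A)) hc⟩

theorem isConj_of_mul_self_eq {D : Type*} [DivisionRing D] {a b : D} (h : a * a = b * b)
    (hne : a + b ≠ 0) : IsConj a b :=
  ⟨Units.mk0 _ hne, by rw [SemiconjBy, Units.val_mk0, add_mul, mul_add, h, add_comm]⟩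

theorem simOrbit_eq_conjugatesOf (q : ℍ) : simOrbit q = conjugatesOf q := by
  ext p
  constructor
  · rintro ⟨l, hl, rfl⟩
    exact ⟨Units.mk0 l hl, by simp [SemiconjBy, mul_assoc, hl]⟩
  · rintro ⟨c, hc⟩
    exact ⟨c, c.ne_zero, by rw [hc.eq, mul_inv_cancel_right₀ c.ne_zero]⟩

namespace Quaternion

noncomputable def charpoly (r : ℍ) : ℝ[X] := X ^ 2 - C (2 * r.re) * X + C (normSq r)

theorem aeval_charpoly (r q : ℍ) :
    aeval q (charpoly r) = q * q - ((2 * r.re : ℝ) : ℍ) * q + ((normSq r : ℝ) : ℍ) := by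
  simp [charpoly, sq]

theorem aeval_self_charpoly (r : ℍ) : aeval r (charpoly r) = 0 := by
  rw [aeval_charpoly, ← self_add_star', ← self_mul_star, add_mul, star_comm_self]
  abel

theorem re_eq_and_normSq_eq_of_aeval_charpoly_eq_zero {p r : ℍ}
    (h : aeval p (charpoly r) = 0) : p.re = r.re ∧ normSq p = normSq r := by
  rw [aeval_charpoly] at h
  have h0 := congrArg QuaternionAlgebra.re h
  have h1 := congrArg QuaternionAlgebra.imI h
  have h2 := congrArg QuaternionAlgebra.imJ h
  have h3 := congrArg QuaternionAlgebra.imK h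
  simp only [coe_mul, re_add, re_sub, re_mul, re_coe, imI_coe, mul_zero, sub_zero, imJ_coe,
    imK_coe, imI_mul, zero_mul, add_zero, sub_self, imJ_mul, imK_mul, re_zero, imI_add, imI_sub,
    imI_zero, imJ_add, imJ_sub, imJ_zero, imK_add, imK_sub, imK_zero] at h0 h1 h2 h3
  have hm : 0 ≤ normSq r - r.re ^ 2 := by
    rw [normSq_def']
    nlinarith [sq_nonneg r.imI, sq_nonneg r.imJ, sq_nonneg r.imK]
  -- `h1`-`h3` say `(Re p - Re r) Im p = 0`, which kills the `|Im p|²` term of `(Re p - Re r)² h0`.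
  have key : (p.re - r.re) ^ 2 * ((p.re - r.re) ^ 2 + (normSq r - r.re ^ 2)) = 0 := by
    linear_combination (p.re - r.re) ^ 2 * h0 + ((p.re - r.re) * p.imI / 2) * h1
      + ((p.re - r.re) * p.imJ / 2) * h2 + ((p.re - r.re) * p.imK / 2) * h3
  have hre : p.re = r.re := by
    rcases mul_eq_zero.mp key with h | h <;> nlinarith [sq_nonneg (p.re - r.re)]
  refine ⟨hre, ?_⟩
  rw [normSq_def']
  linear_combination -h0 + 2 * p.re * hre

theorem isConj_neg_mk (s : ℝ) : IsConj (-⟨0, s, 0, 0⟩ : ℍ) ⟨0, s, 0, 0⟩ := by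
  have hj : (⟨0, 0, 1, 0⟩ : ℍ) ≠ 0 := fun h => by simpa using congrArg QuaternionAlgebra.imJ h
  have h : (⟨0, 0, 1, 0⟩ : ℍ) * -⟨0, s, 0, 0⟩ = ⟨0, s, 0, 0⟩ * ⟨0, 0, 1, 0⟩ := by
    ext <;> simp
  exact ⟨Units.mk0 _ hj, h⟩

theorem isConj_mk_norm_of_re_eq_zero {a : ℍ} (ha : a.re = 0) : IsConj a ⟨0, ‖a‖, 0, 0⟩ := by
  have hsq : (⟨0, ‖a‖, 0, 0⟩ : ℍ) * ⟨0, ‖a‖, 0, 0⟩ = a * a := by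
    rw [← sq a, sq_eq_neg_normSq.mpr ha, normSq_eq_norm_mul_self]
    ext <;> simp
  by_cases hne : a + ⟨0, ‖a‖, 0, 0⟩ = 0
  · generalize ‖a‖ = s at hne ⊢
    rw [eq_neg_of_add_eq_zero_left hne]
    exact isConj_neg_mk s
  · exact isConj_of_mul_self_eq hsq.symm hne

theorem normSq_eq_re_sq_add_norm_im_sq (p : ℍ) : normSq p = p.re ^ 2 + ‖p.im‖ ^ 2 := by
  rw [sq ‖p.im‖, ← normSq_eq_norm_mul_self, normSq_def', normSq_def']
  simp only [re_im, imI_im, imJ_im, imK_im]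
  ring

theorem isConj_of_re_eq_of_normSq_eq {p r : ℍ} (hre : p.re = r.re)
    (hn : normSq p = normSq r) : IsConj p r := by
  have him : ‖p.im‖ = ‖r.im‖ := by
    rw [normSq_eq_re_sq_add_norm_im_sq, normSq_eq_re_sq_add_norm_im_sq, hre] at hn
    exact (sq_eq_sq₀ (norm_nonneg _) (norm_nonneg _)).mp (add_left_cancel hn)
  have hconj : IsConj p.im r.im :=
    ((isConj_mk_norm_of_re_eq_zero p.re_im).trans
      (him ▸ (isConj_mk_norm_of_re_eq_zero r.re_im).symm))
  rw [← re_add_im p, ← re_add_im r, hre]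
  exact hconj.algebraMap_add r.re

theorem isConj_of_aeval_charpoly_eq_zero {p r : ℍ} (h : aeval p (charpoly r) = 0) :
    IsConj p r :=
  (re_eq_and_normSq_eq_of_aeval_charpoly_eq_zero h).elim isConj_of_re_eq_of_normSq_eq

end Quaternion

instance : StarModule ℝ ℍ := ⟨fun c a => by rw [Quaternion.star_smul, star_trivial c]⟩

section QInnerL2

variable {α : Type*} [MeasurableSpace α] {μ : Measure α}

def LeftHLinearL2.toLinearMap {T : Lp ℍ 2 μ → Lp ℍ 2 μ} (hT : LeftHLinearL2 T) :
    Module.End ℍ (Lp ℍ 2 μ) where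
  toFun := T
  map_add' u v := by simpa using hT 1 1 u v
  map_smul' p u := by simpa using hT p 0 u u

theorem integrable_mul_star (u v : Lp ℍ 2 μ) : Integrable (fun x => u x * star (v x)) μ :=
  memLp_one_iff_integrable.mp ((Lp.memLp v).star.mul' (Lp.memLp u))

theorem star_qInnerL2 (u v : Lp ℍ 2 μ) : star (qInnerL2 μ u v) = qInnerL2 μ v u := by
  have h := (starL' ℝ : ℍ ≃L[ℝ] ℍ).integral_comp_comm (μ := μ) fun x => u x * star (v x)
  simp only [starL'_apply, star_mul, star_star] at h
  exact h.symm

theorem qInnerL2_add_left (u w v : Lp ℍ 2 μ) :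
    qInnerL2 μ (u + w) v = qInnerL2 μ u v + qInnerL2 μ w v := by
  rw [qInnerL2, qInnerL2, qInnerL2,
    ← integral_add (integrable_mul_star u v) (integrable_mul_star w v)]
  refine integral_congr_ae ?_
  filter_upwards [Lp.coeFn_add u w] with x hx
  rw [hx, Pi.add_apply, add_mul]

theorem qInnerL2_add_right (u v w : Lp ℍ 2 μ) :
    qInnerL2 μ u (v + w) = qInnerL2 μ u v + qInnerL2 μ u w := by
  rw [← star_qInnerL2, qInnerL2_add_left, star_add, star_qInnerL2, star_qInnerL2]

theorem qInnerL2_smul_left (p : ℍ) (u v : Lp ℍ 2 μ) :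
    qInnerL2 μ (p • u) v = p * qInnerL2 μ u v := by
  rw [qInnerL2, qInnerL2, ← smul_eq_mul, ← integral_smul]
  refine integral_congr_ae ?_
  filter_upwards [Lp.coeFn_smul p u] with x hx
  rw [hx, Pi.smul_apply, smul_eq_mul, smul_eq_mul, mul_assoc]

theorem qInnerL2_smul_right (p : ℍ) (u v : Lp ℍ 2 μ) :
    qInnerL2 μ u (p • v) = qInnerL2 μ u v * star p := by
  rw [← star_qInnerL2, qInnerL2_smul_left, star_mul, star_qInnerL2]

theorem qInnerL2_zero_right (u : Lp ℍ 2 μ) : qInnerL2 μ u 0 = 0 := by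
  simpa using qInnerL2_smul_right 0 u 0

theorem qInnerL2_real_smul_left_eq_smul_right (c : ℝ) (u v : Lp ℍ 2 μ) :
    qInnerL2 μ (c • u) v = qInnerL2 μ u (c • v) := by
  rw [← algebraMap_smul ℍ c u, ← algebraMap_smul ℍ c v, qInnerL2_smul_left, qInnerL2_smul_right,
    ← algebraMap_star_comm, star_trivial, Algebra.commutes]

theorem eq_zero_of_qInnerL2_self_eq_zero {w : Lp ℍ 2 μ} (h : qInnerL2 μ w w = 0) : w = 0 := by
  -- `⟪1, q⟫_ℝ = Re q` turns the real inner product of `L²(μ, ℍ)` into the real part of `qInnerL2`.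
  have hre : ∀ q : ℍ, inner ℝ q q = inner ℝ (1 : ℍ) (q * star q) := fun q => by
    rw [inner_def, inner_def, one_mul, star_mul, star_star]
  rw [← inner_self_eq_zero (𝕜 := ℝ), L2.inner_def]
  simp_rw [hre]
  rw [integral_inner (integrable_mul_star w w), ← qInnerL2, h, inner_zero_right]

theorem qInnerL2_aeval_apply_left {A B : Module.End ℍ (Lp ℍ 2 μ)}
    (hAB : ∀ u v, qInnerL2 μ (A u) v = qInnerL2 μ u (B v)) (f : ℝ[X]) (u v : Lp ℍ 2 μ) :
    qInnerL2 μ (aeval A f u) v = qInnerL2 μ u (aeval B f v) := by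
  induction f using Polynomial.induction_on generalizing u v with
  | C c => simp [Module.algebraMap_end_apply, qInnerL2_real_smul_left_eq_smul_right]
  | add f g hf hg => simp [qInnerL2_add_left, qInnerL2_add_right, hf, hg]
  | monomial n c ih =>
    have hcomm : Commute (aeval B (C c * X ^ n)) B := (Commute.refl B).aeval_left _
    rw [pow_succ, ← mul_assoc, map_mul (aeval A), map_mul (aeval B), aeval_X, aeval_X, hcomm.eq,
      Module.End.mul_apply, Module.End.mul_apply, ih, hAB]

theorem apply_eq_zero_of_commute_of_adjoint {C C' : Module.End ℍ (Lp ℍ 2 μ)}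
    (hadj : ∀ u v, qInnerL2 μ (C' u) v = qInnerL2 μ u (C v)) (hcomm : Commute C C')
    {v : Lp ℍ 2 μ} (hv : C v = 0) : C' v = 0 :=
  eq_zero_of_qInnerL2_self_eq_zero (by
    rw [hadj, ← Module.End.mul_apply, hcomm.eq, Module.End.mul_apply, hv, map_zero,
      qInnerL2_zero_right])

end QInnerL2

theorem eigenvectors_orthogonal_of_distinct_orbits_general {X : Type*} [MeasurableSpace X]
    (μ : Measure X)
    (T T' : Lp (Quaternion ℝ) 2 μ → Lp (Quaternion ℝ) 2 μ)
    (hT : LeftHLinearL2 T)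
    (hT' : LeftHLinearL2 T')
    (hadj : ∀ u v, qInnerL2 μ (T u) v = qInnerL2 μ u (T' v))
    (hnormal : T ∘ T' = T' ∘ T)
    (u v : Lp (Quaternion ℝ) 2 μ) (p r : Quaternion ℝ)
    (hu : T u = p • u) (hv : T v = r • v)
    (horb : simOrbit p ≠ simOrbit r) :
    qInnerL2 μ u v = 0 := by
  set A := hT.toLinearMap
  set B := hT'.toLinearMap
  have hAB : ∀ u v, qInnerL2 μ (A u) v = qInnerL2 μ u (B v) := hadj
  have hBA : ∀ u v, qInnerL2 μ (B u) v = qInnerL2 μ u (A v) := fun u v => by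
    rw [← star_qInnerL2, ← hAB, star_qInnerL2]
  have hcomm : Commute A B := LinearMap.ext (congrFun hnormal)
  have hAv : aeval A (charpoly r) v = 0 := by
    rw [Module.End.aeval_apply_of_apply_eq_smul (A := A) hv, aeval_self_charpoly, zero_smul]
  have hBv : aeval B (charpoly r) v = 0 :=
    apply_eq_zero_of_commute_of_adjoint (qInnerL2_aeval_apply_left hBA _) (hcomm.aeval _ _) hAv
  have hp : aeval p (charpoly r) * qInnerL2 μ u v = 0 := by
    rw [← qInnerL2_smul_left, ← Module.End.aeval_apply_of_apply_eq_smul (A := A) hu,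
      qInnerL2_aeval_apply_left hAB, hBv, qInnerL2_zero_right]
  have hp0 : aeval p (charpoly r) ≠ 0 := fun h => horb <| by
    rw [simOrbit_eq_conjugatesOf, simOrbit_eq_conjugatesOf]
    exact (isConj_of_aeval_charpoly_eq_zero h).conjugatesOf_eq
  exact (mul_eq_zero.mp hp).resolve_left hp0

/-- Eigenvectors of a bounded left ℍ-linear normal operator on `L²(μ, ℍ)` belonging
to eigenvalues with distinct similarity orbits are orthogonal. -/
theorem eigenvectors_orthogonal_of_distinct_orbits {X : Type*} [MeasurableSpace X]
    (μ : Measure X)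
    (T T' : Lp (Quaternion ℝ) 2 μ → Lp (Quaternion ℝ) 2 μ)
    (hT : LeftHLinearL2 T) (hTb : BoundedOpL2 T)
    (hT' : LeftHLinearL2 T') (hT'b : BoundedOpL2 T')
    (hadj : ∀ u v, qInnerL2 μ (T u) v = qInnerL2 μ u (T' v))
    (hnormal : T ∘ T' = T' ∘ T)
    (u v : Lp (Quaternion ℝ) 2 μ) (p r : Quaternion ℝ)
    (hu : T u = p • u) (hv : T v = r • v)
    (horb : simOrbit p ≠ simOrbit r) :
    qInnerL2 μ u v = 0 :=
  eigenvectors_orthogonal_of_distinct_orbits_general μ T T' hT hT' hadj hnormal u v p r hu hv horb
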